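/- arXiv:2301.11201 — 2 statements merged into one kernel-verified Lean document; each statement's English description precedes it below -/
import Mathlib

section
/- Let (α', β') be optimal for the dual LP of the LAP P'. Define α_v = α'_v + β'_v for v ∈ V and β_ℓ = α'_ℓ + β'_ℓ for ℓ ∈ L∖{#}. Then (α, β) is optimal for the dual LP formulation of the ILAP P. -/
open Finset

/-! Incomplete LAP (ILAP): labels are `Option K`, the dummy label `#` is `none`.
The reduced complete LAP instance `P'` lives on `V ⊕ K` (both partitions equal
`V ∪ (L ∖ {#})`). -/

section IlapDefs

variable {V K : Type*} [Fintype V] [Fintype K] [DecidableEq V] [DecidableEq K]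

/-- Feasibility for the ILAP: allowed labels, and each non-dummy label used at most once. -/
def IlapFeasible (Lab : V → Finset (Option K)) (x : V → Option K) : Prop :=
  (∀ v, x v ∈ Lab v) ∧ ∀ u v k, x u = some k → x v = some k → u = v

/-- Cost of an ILAP assignment. -/
def ilapCost (θ : V → Option K → ℝ) (x : V → Option K) : ℝ := ∑ v, θ v (x v)

/-- Allowed labels of the reduced LAP instance `P'` on `V ⊕ K`:
`L'_v = (L_v ∖ {#}) ∪ {v}` and `L'_ℓ = V_ℓ ∪ {ℓ}`. -/
def redLab (Lab : V → Finset (Option K)) : V ⊕ K → Finset (V ⊕ K)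
  | Sum.inl v => insert (Sum.inl v) ((univ.filter fun k => some k ∈ Lab v).image Sum.inr)
  | Sum.inr k => insert (Sum.inr k) ((univ.filter fun v => some k ∈ Lab v).image Sum.inl)

/-- Costs of the reduced LAP instance `P'`: halved original costs between `V` and `L ∖ {#}`,
`θ_v(#)` on the vertex diagonal and `0` on the label diagonal. -/
noncomputable def redCost (θ : V → Option K → ℝ) : V ⊕ K → V ⊕ K → ℝ
  | Sum.inl v, Sum.inr k => θ v (some k) / 2
  | Sum.inr k, Sum.inl v => θ v (some k) / 2
  | Sum.inl v, Sum.inl _ => θ v none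
  | Sum.inr _, Sum.inr _ => 0

/-- Feasibility for the primal LP formulation of the ILAP. -/
def IlapPrimalFeasible (Lab : V → Finset (Option K)) (μ : V → Option K → ℝ) : Prop :=
  (∀ v ℓ, ℓ ∈ Lab v → 0 ≤ μ v ℓ) ∧
  (∀ v ℓ, ℓ ∉ Lab v → μ v ℓ = 0) ∧
  (∀ v, ∑ ℓ ∈ Lab v, μ v ℓ = 1) ∧
  (∀ k : K, ∑ v ∈ univ.filter (fun v => some k ∈ Lab v), μ v (some k) ≤ 1)

/-- Objective of the primal LP formulation of the ILAP. -/
def ilapPrimalObj (θ : V → Option K → ℝ) (Lab : V → Finset (Option K))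
    (μ : V → Option K → ℝ) : ℝ :=
  ∑ v, ∑ ℓ ∈ Lab v, θ v ℓ * μ v ℓ

/-- The set of optimal solutions of the primal LP formulation of the ILAP. -/
def IlapPrimalOpt (θ : V → Option K → ℝ) (Lab : V → Finset (Option K)) :
    Set (V → Option K → ℝ) :=
  {μ | IlapPrimalFeasible Lab μ ∧
    ∀ ν, IlapPrimalFeasible Lab ν → ilapPrimalObj θ Lab μ ≤ ilapPrimalObj θ Lab ν}

/-- Feasibility for the dual LP formulation of the ILAP: `β ≤ 0` and
`α_v + [ℓ ≠ #]·β_ℓ ≤ θ_v(ℓ)` on allowed pairs. -/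
def IlapDualFeasible (θ : V → Option K → ℝ) (Lab : V → Finset (Option K))
    (p : (V → ℝ) × (K → ℝ)) : Prop :=
  (∀ k, p.2 k ≤ 0) ∧
  ∀ v ℓ, ℓ ∈ Lab v →
    p.1 v + (match ℓ with | some k => p.2 k | none => 0) ≤ θ v ℓ

/-- Objective of the dual LP formulation of the ILAP. -/
def ilapDualObj (p : (V → ℝ) × (K → ℝ)) : ℝ := ∑ v, p.1 v + ∑ k, p.2 k

/-- The set of optimal solutions of the dual LP formulation of the ILAP. -/
def IlapDualOpt (θ : V → Option K → ℝ) (Lab : V → Finset (Option K)) :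
    Set ((V → ℝ) × (K → ℝ)) :=
  {p | IlapDualFeasible θ Lab p ∧
    ∀ q, IlapDualFeasible θ Lab q → ilapDualObj q ≤ ilapDualObj p}

end IlapDefs

section LAPDefs

variable {V L : Type*} [Fintype V] [Fintype L] [DecidableEq V] [DecidableEq L]

/-- Feasibility for the primal LP of a (complete) LAP. -/
def PrimalFeasible (Lab : V → Finset L) (μ : V → L → ℝ) : Prop :=
  (∀ v ℓ, ℓ ∈ Lab v → 0 ≤ μ v ℓ) ∧
  (∀ v ℓ, ℓ ∉ Lab v → μ v ℓ = 0) ∧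
  (∀ v, ∑ ℓ ∈ Lab v, μ v ℓ = 1) ∧
  (∀ ℓ : L, ∑ v ∈ univ.filter (fun v => ℓ ∈ Lab v), μ v ℓ = 1)

/-- Objective of the primal LP of a (complete) LAP. -/
def primalObj (θ : V → L → ℝ) (Lab : V → Finset L) (μ : V → L → ℝ) : ℝ :=
  ∑ v, ∑ ℓ ∈ Lab v, θ v ℓ * μ v ℓ

/-- The set of optimal solutions of the primal LP of a (complete) LAP. -/
def PrimalOpt (θ : V → L → ℝ) (Lab : V → Finset L) : Set (V → L → ℝ) :=
  {μ | PrimalFeasible Lab μ ∧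
    ∀ ν, PrimalFeasible Lab ν → primalObj θ Lab μ ≤ primalObj θ Lab ν}

/-- Feasibility for the dual LP of a (complete) LAP. -/
def DualFeasible (θ : V → L → ℝ) (Lab : V → Finset L) (p : (V → ℝ) × (L → ℝ)) : Prop :=
  ∀ v ℓ, ℓ ∈ Lab v → p.1 v + p.2 ℓ ≤ θ v ℓ

/-- Objective of the dual LP of a (complete) LAP. -/
def dualObj (p : (V → ℝ) × (L → ℝ)) : ℝ := ∑ v, p.1 v + ∑ ℓ, p.2 ℓ

/-- The set of optimal solutions of the dual LP of a (complete) LAP. -/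
def DualOpt (θ : V → L → ℝ) (Lab : V → Finset L) : Set ((V → ℝ) × (L → ℝ)) :=
  {p | DualFeasible θ Lab p ∧ ∀ q, DualFeasible θ Lab q → dualObj q ≤ dualObj p}

end LAPDefs

/-!
Both dual programs are compared through two objective-preserving maps. Folding a dual
solution `(α', β')` of `P'` to `(α'_w + β'_w)_w` is feasible for the ILAP dual: the diagonal
constraints of `P'` give `α_v ≤ θ_v(#)` and `β_ℓ ≤ 0`, and adding the constraints of the two
mirrored pairs `(v, ℓ)` and `(ℓ, v)`, whose costs are both `θ_v(ℓ)/2`, gives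
`α_v + β_ℓ ≤ θ_v(ℓ)`. Conversely, halving an ILAP dual solution and using it for both
`α'` and `β'` is feasible for `P'`. Hence no ILAP dual solution beats the folded optimum.
-/

section ReducedLAP

variable {V K : Type*}

/-- The map (21) from dual solutions of `P'` to dual solutions of the ILAP. -/
def foldDual (p : (V ⊕ K → ℝ) × (V ⊕ K → ℝ)) : (V → ℝ) × (K → ℝ) :=
  (fun v => p.1 (Sum.inl v) + p.2 (Sum.inl v), fun k => p.1 (Sum.inr k) + p.2 (Sum.inr k))

noncomputable def splitDual (q : (V → ℝ) × (K → ℝ)) : (V ⊕ K → ℝ) × (V ⊕ K → ℝ) :=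
  let s := Sum.elim (fun v => q.1 v / 2) (fun k => q.2 k / 2)
  (s, s)

variable [Fintype V] [Fintype K]

theorem ilapDualObj_foldDual (p : (V ⊕ K → ℝ) × (V ⊕ K → ℝ)) :
    ilapDualObj (foldDual p) = dualObj p := by
  simp only [ilapDualObj, dualObj, foldDual, Fintype.sum_sum_type, sum_add_distrib]
  ring

theorem dualObj_splitDual (q : (V → ℝ) × (K → ℝ)) : dualObj (splitDual q) = ilapDualObj q := by
  simp only [dualObj, ilapDualObj, splitDual, Fintype.sum_sum_type, Sum.elim_inl, Sum.elim_inr,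
    ← sum_div]
  ring

variable [DecidableEq V] [DecidableEq K] (Lab : V → Finset (Option K))

@[simp]
theorem inl_mem_redLab_inl_iff {u v : V} : Sum.inl u ∈ redLab Lab (Sum.inl v) ↔ u = v := by
  simp [redLab]

@[simp]
theorem inr_mem_redLab_inr_iff {k l : K} : Sum.inr k ∈ redLab Lab (Sum.inr l) ↔ k = l := by
  simp [redLab]

@[simp]
theorem inr_mem_redLab_inl_iff {v : V} {k : K} :
    Sum.inr k ∈ redLab Lab (Sum.inl v) ↔ some k ∈ Lab v := by
  simp [redLab]

@[simp]
theorem inl_mem_redLab_inr_iff {v : V} {k : K} :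
    Sum.inl v ∈ redLab Lab (Sum.inr k) ↔ some k ∈ Lab v := by
  simp [redLab]

variable {Lab} {θ : V → Option K → ℝ}

theorem ilapDualFeasible_foldDual {p : (V ⊕ K → ℝ) × (V ⊕ K → ℝ)}
    (hp : DualFeasible (redCost θ) (redLab Lab) p) :
    IlapDualFeasible θ Lab (foldDual p) := by
  refine ⟨fun k => ?_, fun v ℓ hℓ => ?_⟩
  · simpa [foldDual, redCost] using hp (Sum.inr k) (Sum.inr k) (by simp)
  · cases ℓ with
    | none => simpa [foldDual, redCost] using hp (Sum.inl v) (Sum.inl v) (by simp)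
    | some k =>
      have hvk := hp (Sum.inl v) (Sum.inr k) (by simpa using hℓ)
      have hkv := hp (Sum.inr k) (Sum.inl v) (by simpa using hℓ)
      simp only [redCost] at hvk hkv
      simp only [foldDual]
      linarith

theorem dualFeasible_splitDual (hdum : ∀ v, (none : Option K) ∈ Lab v)
    {q : (V → ℝ) × (K → ℝ)} (hq : IlapDualFeasible θ Lab q) :
    DualFeasible (redCost θ) (redLab Lab) (splitDual q) := by
  obtain ⟨hβ, hα⟩ := hq
  rintro (v | k) (u | l) hmem
  · obtain rfl : u = v := (inl_mem_redLab_inl_iff Lab).1 hmem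
    have hle := hα u none (hdum u)
    simp only [splitDual, redCost, Sum.elim_inl] at hle ⊢
    linarith
  · have hle := hα v (some l) ((inr_mem_redLab_inl_iff Lab).1 hmem)
    simp only [splitDual, redCost, Sum.elim_inl, Sum.elim_inr] at hle ⊢
    linarith
  · have hle := hα u (some k) ((inl_mem_redLab_inr_iff Lab).1 hmem)
    simp only [splitDual, redCost, Sum.elim_inl, Sum.elim_inr] at hle ⊢
    linarith
  · obtain rfl : l = k := (inr_mem_redLab_inr_iff Lab).1 hmem
    have hle := hβ l
    simp only [splitDual, redCost, Sum.elim_inr]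
    linarith

end ReducedLAP

/-- Theorem 5(d): the map (21) sends a dual-optimal solution of the reduced LAP `P'`
to an optimal solution of the dual LP formulation of the ILAP `P`. -/
theorem statement16 {V K : Type*} [Fintype V] [Fintype K] [DecidableEq V] [DecidableEq K]
    (Lab : V → Finset (Option K)) (hdum : ∀ v, (none : Option K) ∈ Lab v)
    (θ : V → Option K → ℝ)
    (α' β' : (V ⊕ K) → ℝ) (hd : (α', β') ∈ DualOpt (redCost θ) (redLab Lab))
    (α : V → ℝ) (β : K → ℝ)
    (hα : α = fun v => α' (Sum.inl v) + β' (Sum.inl v))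
    (hβ : β = fun k => α' (Sum.inr k) + β' (Sum.inr k)) :
    (α, β) ∈ IlapDualOpt θ Lab := by
  obtain ⟨hfeas, hopt⟩ := hd
  have hfold : (α, β) = foldDual (α', β') := by subst hα hβ; rfl
  rw [hfold]
  refine ⟨ilapDualFeasible_foldDual hfeas, fun q hq => ?_⟩
  calc ilapDualObj q = dualObj (splitDual q) := (dualObj_splitDual q).symm
    _ ≤ dualObj (α', β') := hopt _ (dualFeasible_splitDual hdum hq)
    _ = ilapDualObj (foldDual (α', β')) := (ilapDualObj_foldDual _).symm
end

section
/- Let (α', β') lie in the relative interior of the set of optimal solutions of the dual LP of the LAP P'. Define α_v = α'_v + β'_v for v ∈ V and β_ℓ = α'_ℓ + β'_ℓ for ℓ ∈ L∖{#}. Then (α, β) lies in the relative interior of the set of optimal solutions of the dual LP formulation of the ILAP P. -/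
open Finset

/-!
The map `T (α', β') = (α, β)` is linear and has the linear section `S q = (q/2, q/2)`
(`q` spread over `V ⊕ K`). Both maps preserve dual feasibility and the dual objective, so `T`
maps the optimal dual set `B` of `P'` onto that of `P`, and `S` maps it back into `B`.
Relative interiors then go along: if `x` is in the relative interior of `B`, the affine right
inverse `y ↦ x + S y - S (T x)` of `T` is continuous, sends `T x` to `x` and the affine span of
`T '' B` into that of `B`, so every `y` near `T x` in that span is `T` of a point of `B`.
-/

section IntrinsicInterior

open Set Filter Topology

variable {𝕜 E F : Type*} [Ring 𝕜] [AddCommGroup E] [Module 𝕜 E] [TopologicalSpace E]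
  [AddCommGroup F] [Module 𝕜 F] [TopologicalSpace F]

theorem mem_intrinsicInterior_iff_mem_nhdsWithin {s : Set E} {x : E} :
    x ∈ intrinsicInterior 𝕜 s ↔ x ∈ affineSpan 𝕜 s ∧ s ∈ 𝓝[affineSpan 𝕜 s] x := by
  constructor
  · rintro ⟨⟨x, hxA⟩, hx, rfl⟩
    refine ⟨hxA, ?_⟩
    rw [mem_interior_iff_mem_nhds, mem_nhds_subtype_iff_nhdsWithin] at hx
    exact mem_of_superset hx (image_preimage_subset _ _)
  · rintro ⟨hxA, hs⟩
    refine ⟨⟨x, hxA⟩, ?_, rfl⟩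
    rw [mem_interior_iff_mem_nhds, mem_nhds_subtype_iff_nhdsWithin]
    exact mem_of_superset (inter_mem self_mem_nhdsWithin hs)
      fun y ⟨hyA, hys⟩ => ⟨⟨y, hyA⟩, hys, rfl⟩

theorem mapsTo_intrinsicInterior_image [ContinuousAdd E] (T : E →ₗ[𝕜] F) (S : F →ₗ[𝕜] E)
    (hS : Continuous S) (hTS : Function.RightInverse S T) {B : Set E}
    (hSB : MapsTo S (T '' B) B) :
    MapsTo T (intrinsicInterior 𝕜 B) (intrinsicInterior 𝕜 (T '' B)) := by
  intro x hx
  rw [mem_intrinsicInterior_iff_mem_nhdsWithin] at hx ⊢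
  obtain ⟨hxA, hxB⟩ := hx
  have hx : x ∈ B := mem_of_mem_nhdsWithin hxA hxB
  let φ : F →ᵃ[𝕜] E := S.toAffineMap + AffineMap.const 𝕜 F (x - S (T x))
  have hφ : ∀ y, φ y = S y + (x - S (T x)) := fun y => rfl
  have hTφ : ∀ y, T (φ y) = y := fun y => by simp [hφ, hTS y, hTS (T x)]
  have hφx : φ (T x) = x := by simp [hφ]
  have hφA : MapsTo φ (affineSpan 𝕜 (T '' B)) (affineSpan 𝕜 B) := by
    intro y hy
    have : φ y ∈ (affineSpan 𝕜 (T '' B)).map φ := AffineSubspace.mem_map_of_mem φ hy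
    rw [AffineSubspace.map_span] at this
    refine affineSpan_le.2 ?_ this
    rintro _ ⟨_, ⟨z, hz, rfl⟩, rfl⟩
    have := AffineSubspace.vadd_mem_of_mem_direction
      (AffineSubspace.vsub_mem_direction (subset_affineSpan 𝕜 _ (hSB ⟨z, hz, rfl⟩))
        (subset_affineSpan 𝕜 _ (hSB ⟨x, hx, rfl⟩))) (subset_affineSpan 𝕜 _ hx)
    simpa [hφ, vsub_eq_sub, vadd_eq_add, add_sub_assoc', sub_add_eq_add_sub, add_comm] using this
  have hφc : Continuous φ := (hS.add continuous_const :)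
  refine ⟨subset_affineSpan 𝕜 _ ⟨x, hx, rfl⟩, ?_⟩
  have hlim : Tendsto φ (𝓝[affineSpan 𝕜 (T '' B)] (T x)) (𝓝[affineSpan 𝕜 B] x) := by
    simpa only [hφx] using (hφc.continuousWithinAt (x := T x)).tendsto_nhdsWithin hφA
  filter_upwards [hlim hxB] with y hy using ⟨φ y, hy, hTφ y⟩

end IntrinsicInterior

section Reduction

variable {V K : Type*}

@[simps]
def toIlapDual : ((V ⊕ K → ℝ) × (V ⊕ K → ℝ)) →ₗ[ℝ] (V → ℝ) × (K → ℝ) where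
  toFun p := (fun v => p.1 (.inl v) + p.2 (.inl v), fun k => p.1 (.inr k) + p.2 (.inr k))
  map_add' p q := by ext <;> simp only [Prod.fst_add, Prod.snd_add, Pi.add_apply] <;> ring
  map_smul' c p := by ext <;> simp only [Prod.smul_fst, Prod.smul_snd, Pi.smul_apply,
    smul_eq_mul, RingHom.id_apply] <;> ring

@[simps]
noncomputable def ofIlapDual : (V → ℝ) × (K → ℝ) →ₗ[ℝ] (V ⊕ K → ℝ) × (V ⊕ K → ℝ) where
  toFun q := let h := Sum.elim (fun v => q.1 v / 2) (fun k => q.2 k / 2); (h, h)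
  map_add' p q := by ext (_ | _) <;> simp only [Prod.fst_add, Prod.snd_add, Pi.add_apply,
    Sum.elim_inl, Sum.elim_inr] <;> ring
  map_smul' c p := by ext (_ | _) <;> simp only [Prod.smul_fst, Prod.smul_snd, Pi.smul_apply,
    smul_eq_mul, RingHom.id_apply, Sum.elim_inl, Sum.elim_inr] <;> ring

theorem toIlapDual_ofIlapDual : Function.RightInverse (ofIlapDual (V := V) (K := K)) toIlapDual :=
  fun q => by ext <;> simp

variable [Fintype V] [Fintype K]

theorem ilapDualObj_toIlapDual (p : (V ⊕ K → ℝ) × (V ⊕ K → ℝ)) :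
    ilapDualObj (toIlapDual p) = dualObj p := by
  simp only [dualObj, ilapDualObj, toIlapDual_apply, Fintype.sum_sum_type, sum_add_distrib]
  ring

theorem dualObj_ofIlapDual (q : (V → ℝ) × (K → ℝ)) : dualObj (ofIlapDual q) = ilapDualObj q := by
  simp only [dualObj, ilapDualObj, ofIlapDual_apply, Fintype.sum_sum_type, Sum.elim_inl,
    Sum.elim_inr, ← sum_div]
  ring

variable [DecidableEq V] [DecidableEq K] {Lab : V → Finset (Option K)} {θ : V → Option K → ℝ}

theorem inr_mem_redLab_inl {v : V} {k : K} (h : some k ∈ Lab v) :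
    Sum.inr k ∈ redLab Lab (.inl v) :=
  mem_insert_of_mem (mem_image_of_mem _ (mem_filter.2 ⟨mem_univ _, h⟩))

theorem inl_mem_redLab_inr {v : V} {k : K} (h : some k ∈ Lab v) :
    Sum.inl v ∈ redLab Lab (.inr k) :=
  mem_insert_of_mem (mem_image_of_mem _ (mem_filter.2 ⟨mem_univ _, h⟩))

theorem ilapDualFeasible_toIlapDual {p : (V ⊕ K → ℝ) × (V ⊕ K → ℝ)}
    (hp : DualFeasible (redCost θ) (redLab Lab) p) : IlapDualFeasible θ Lab (toIlapDual p) := by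
  refine ⟨fun k => by simpa [redCost] using hp (.inr k) (.inr k) (mem_insert_self _ _), ?_⟩
  rintro v (_ | k) hk
  · simpa [redCost] using hp (.inl v) (.inl v) (mem_insert_self _ _)
  · -- the two halves `θ_v(k)/2` of the constraints at `(v, k)` and `(k, v)` add up
    have h₁ := hp (.inl v) (.inr k) (inr_mem_redLab_inl hk)
    have h₂ := hp (.inr k) (.inl v) (inl_mem_redLab_inr hk)
    simp only [redCost, toIlapDual_apply] at h₁ h₂ ⊢
    linarith

theorem dualFeasible_ofIlapDual (hdum : ∀ v, (none : Option K) ∈ Lab v)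
    {q : (V → ℝ) × (K → ℝ)} (hq : IlapDualFeasible θ Lab q) :
    DualFeasible (redCost θ) (redLab Lab) (ofIlapDual q) := by
  rintro (v | k) w hw <;>
    simp only [redLab, mem_insert, mem_image, mem_filter, mem_univ, true_and] at hw
  · rcases hw with rfl | ⟨k, hk, rfl⟩
    · simpa [redCost] using hq.2 v none (hdum v)
    · have := hq.2 v (some k) hk
      simp only [redCost, ofIlapDual_apply, Sum.elim_inl, Sum.elim_inr] at this ⊢
      linarith
  · rcases hw with rfl | ⟨v, hk, rfl⟩
    · simpa [redCost] using hq.1 k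
    · have := hq.2 v (some k) hk
      simp only [redCost, ofIlapDual_apply, Sum.elim_inl, Sum.elim_inr] at this ⊢
      linarith

theorem mapsTo_ofIlapDual (hdum : ∀ v, (none : Option K) ∈ Lab v) :
    Set.MapsTo ofIlapDual (IlapDualOpt θ Lab) (DualOpt (redCost θ) (redLab Lab)) :=
  fun q ⟨hq, hopt⟩ => ⟨dualFeasible_ofIlapDual hdum hq, fun r hr => by
    rw [dualObj_ofIlapDual, ← ilapDualObj_toIlapDual]
    exact hopt _ (ilapDualFeasible_toIlapDual hr)⟩

theorem image_toIlapDual_dualOpt (hdum : ∀ v, (none : Option K) ∈ Lab v) :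
    toIlapDual '' DualOpt (redCost θ) (redLab Lab) = IlapDualOpt θ Lab := by
  refine Set.Subset.antisymm ?_ fun q hq => ⟨ofIlapDual q, mapsTo_ofIlapDual hdum hq,
    toIlapDual_ofIlapDual q⟩
  rintro _ ⟨p, ⟨hp, hopt⟩, rfl⟩
  refine ⟨ilapDualFeasible_toIlapDual hp, fun r hr => ?_⟩
  rw [ilapDualObj_toIlapDual, ← dualObj_ofIlapDual]
  exact hopt _ (dualFeasible_ofIlapDual hdum hr)

end Reduction

/-- Theorem 5(f): the map (21) sends a point of the relative interior of the dual optimal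
set of the reduced LAP `P'` to a point of the relative interior of the optimal set of the
dual LP formulation of the ILAP `P`. -/
theorem statement18 {V K : Type*} [Fintype V] [Fintype K] [DecidableEq V] [DecidableEq K]
    (Lab : V → Finset (Option K)) (hdum : ∀ v, (none : Option K) ∈ Lab v)
    (θ : V → Option K → ℝ)
    (α' β' : (V ⊕ K) → ℝ)
    (hd : (α', β') ∈ intrinsicInterior ℝ (DualOpt (redCost θ) (redLab Lab)))
    (α : V → ℝ) (β : K → ℝ)
    (hα : α = fun v => α' (Sum.inl v) + β' (Sum.inl v))
    (hβ : β = fun k => α' (Sum.inr k) + β' (Sum.inr k)) :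
    (α, β) ∈ intrinsicInterior ℝ (IlapDualOpt θ Lab) := by
  subst hα hβ
  have himage := image_toIlapDual_dualOpt (θ := θ) hdum
  have hmaps := mapsTo_intrinsicInterior_image toIlapDual ofIlapDual
    (LinearMap.continuous_of_finiteDimensional _) toIlapDual_ofIlapDual
    (himage ▸ mapsTo_ofIlapDual hdum)
  rw [himage] at hmaps
  exact hmaps hd
end
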